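/- arXiv:2101.09141 — 3 statements merged into one kernel-verified Lean document; each statement's English description precedes it below -/
import Mathlib

section
/- Let n ∈ ℕ, let a, ā, x, x̄ ∈ ℝⁿ and δ, ε ∈ ℝⁿ with δᵢ ≥ 0, εᵢ ≥ 0, |āᵢ − aᵢ| ≤ δᵢ and |x̄ᵢ − xᵢ| ≤ εᵢ for all i. Let s, η, μ, b ∈ ℝ satisfy |s − ∑ᵢ āᵢx̄ᵢ| ≤ η and μ ≥ η + ∑ᵢ (|āᵢ|·εᵢ + |x̄ᵢ|·δᵢ + δᵢ·εᵢ). If s − μ ≥ b, then ∑ᵢ aᵢxᵢ ≥ b. -/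
/-!
Write `a' x' - a x = a' (x' - x) + (a' - a) x' - (a' - a)(x' - x)`: each term is bounded by the
corresponding error term, so the exact activity lies within the first-order terms plus the
second-order term `δ ε` of the computed one, and `s - μ` is a lower bound for it.
-/

section
variable {R : Type*} [NonUnitalSeminormedRing R]

theorem norm_mul_sub_mul_le_of_norm_sub_le {a a' x x' : R} {δ ε : ℝ}
    (ha : ‖a' - a‖ ≤ δ) (hx : ‖x' - x‖ ≤ ε) :
    ‖a' * x' - a * x‖ ≤ ‖a'‖ * ε + ‖x'‖ * δ + δ * ε := by
  have hδ : 0 ≤ δ := (norm_nonneg _).trans ha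
  have hsplit : a' * x' - a * x = a' * (x' - x) + (a' - a) * x' - (a' - a) * (x' - x) := by
    simp only [mul_sub, sub_mul]
    abel
  calc ‖a' * x' - a * x‖
      ≤ ‖a' * (x' - x)‖ + ‖(a' - a) * x'‖ + ‖(a' - a) * (x' - x)‖ := by
        rw [hsplit]
        exact norm_sub_le_of_le (norm_add_le _ _) le_rfl
    _ ≤ ‖a'‖ * ‖x' - x‖ + ‖a' - a‖ * ‖x'‖ + ‖a' - a‖ * ‖x' - x‖ := by
        gcongr <;> exact norm_mul_le _ _
    _ ≤ ‖a'‖ * ε + δ * ‖x'‖ + δ * ε := by gcongr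
    _ = ‖a'‖ * ε + ‖x'‖ * δ + δ * ε := by ring

theorem norm_sum_mul_sub_sum_mul_le {ι : Type*} (t : Finset ι) {a a' x x' : ι → R}
    {δ ε : ι → ℝ} (ha : ∀ i ∈ t, ‖a' i - a i‖ ≤ δ i) (hx : ∀ i ∈ t, ‖x' i - x i‖ ≤ ε i) :
    ‖∑ i ∈ t, a' i * x' i - ∑ i ∈ t, a i * x i‖
      ≤ ∑ i ∈ t, (‖a' i‖ * ε i + ‖x' i‖ * δ i + δ i * ε i) := by
  rw [← Finset.sum_sub_distrib]
  exact (norm_sum_le _ _).trans <| Finset.sum_le_sum fun i hi =>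
    norm_mul_sub_mul_le_of_norm_sub_le (ha i hi) (hx i hi)

end

theorem safe_feasibility_accept_general
    (n : ℕ) (a abar x xbar δ ε : Fin n → ℝ)
    (ha : ∀ i, |abar i - a i| ≤ δ i) (hx : ∀ i, |xbar i - x i| ≤ ε i)
    (s η μ b : ℝ)
    (hs : |s - ∑ i, abar i * xbar i| ≤ η)
    (hμ : η + ∑ i, (|abar i| * ε i + |xbar i| * δ i + δ i * ε i) ≤ μ)
    (hacc : b ≤ s - μ) :
    b ≤ ∑ i, a i * x i := by
  have happrox := norm_sum_mul_sub_sum_mul_le Finset.univ (a := a) (a' := abar) (x := x)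
    (x' := xbar) (fun i _ => ha i) (fun i _ => hx i)
  simp only [Real.norm_eq_abs] at happrox
  linarith [(abs_le.mp hs).2, (abs_le.mp happrox).2]

/-- Safe acceptance direction of the floating-point feasibility check via
running error analysis: `s` approximates `∑ āᵢx̄ᵢ` with computation error at
most `η`, and `μ` bounds the total error.  If `s - μ ≥ b`, then the exact
activity satisfies `∑ aᵢxᵢ ≥ b`. -/
theorem safe_feasibility_accept
    (n : ℕ) (a abar x xbar δ ε : Fin n → ℝ)
    (hδ : ∀ i, 0 ≤ δ i) (hε : ∀ i, 0 ≤ ε i)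
    (ha : ∀ i, |abar i - a i| ≤ δ i) (hx : ∀ i, |xbar i - x i| ≤ ε i)
    (s η μ b : ℝ)
    (hs : |s - ∑ i, abar i * xbar i| ≤ η)
    (hμ : η + ∑ i, (|abar i| * ε i + |xbar i| * δ i + δ i * ε i) ≤ μ)
    (hacc : b ≤ s - μ) :
    b ≤ ∑ i, a i * x i :=
  safe_feasibility_accept_general n a abar x xbar δ ε ha hx s η μ b hs hμ hacc
end

section
/- Let n ∈ ℕ, let a, ā, x, x̄ ∈ ℝⁿ and δ, ε ∈ ℝⁿ with δᵢ ≥ 0, εᵢ ≥ 0, |āᵢ − aᵢ| ≤ δᵢ and |x̄ᵢ − xᵢ| ≤ εᵢ for all i. Let s, η, μ, b ∈ ℝ satisfy |s − ∑ᵢ āᵢx̄ᵢ| ≤ η and μ ≥ η + ∑ᵢ (|āᵢ|·εᵢ + |x̄ᵢ|·δᵢ + δᵢ·εᵢ). If s + μ < b, then ∑ᵢ aᵢxᵢ < b. -/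
/-- Safe rejection direction of the floating-point feasibility check via
running error analysis: `s` approximates `∑ āᵢx̄ᵢ` with computation error at
most `η`, and `μ` bounds the total error.  If `s + μ < b`, then the exact
activity satisfies `∑ aᵢxᵢ < b`. -/
theorem safe_feasibility_reject
    (n : ℕ) (a abar x xbar δ ε : Fin n → ℝ)
    (hδ : ∀ i, 0 ≤ δ i) (hε : ∀ i, 0 ≤ ε i)
    (ha : ∀ i, |abar i - a i| ≤ δ i) (hx : ∀ i, |xbar i - x i| ≤ ε i)
    (s η μ b : ℝ)
    (hs : |s - ∑ i, abar i * xbar i| ≤ η)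
    (hμ : η + ∑ i, (|abar i| * ε i + |xbar i| * δ i + δ i * ε i) ≤ μ)
    (hrej : s + μ < b) :
    (∑ i, a i * x i) < b := by
  have h1 : ∀ i, a i * x i ≤ abar i * xbar i +
      (|abar i| * ε i + |xbar i| * δ i + δ i * ε i) := by
    intro i
    have e1 : |abar i * (xbar i - x i)| ≤ |abar i| * ε i := by
      rw [abs_mul]; exact mul_le_mul_of_nonneg_left (hx i) (abs_nonneg _)
    have e2 : |(abar i - a i) * xbar i| ≤ |xbar i| * δ i := by
      rw [abs_mul, mul_comm]
      exact mul_le_mul_of_nonneg_left (ha i) (abs_nonneg _)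
    have e3 : |(abar i - a i) * (xbar i - x i)| ≤ δ i * ε i :=
      (abs_mul _ _).le.trans (mul_le_mul (ha i) (hx i) (abs_nonneg _) (hδ i))
    have eq : a i * x i = abar i * xbar i - abar i * (xbar i - x i)
        - (abar i - a i) * xbar i + (abar i - a i) * (xbar i - x i) := by ring
    have := abs_le.mp e1
    have := abs_le.mp e2
    have := abs_le.mp e3
    linarith [eq.le]
  have hsum : ∑ i, a i * x i ≤ (∑ i, abar i * xbar i) +
      ∑ i, (|abar i| * ε i + |xbar i| * δ i + δ i * ε i) := by
    rw [← Finset.sum_add_distrib]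
    exact Finset.sum_le_sum fun i _ => h1 i
  have hη := abs_le.mp hs
  linarith
end

section
/- Let A ∈ ℚ^{m×n}, b ∈ ℚ^m, c ∈ ℚ^n, and let l, u ∈ ℚⁿ be lower and upper variable bounds. Let y ∈ ℚ^m with y ≥ 0 componentwise be arbitrary, and define the residual r = c − Aᵀy ∈ ℚⁿ. Then every x ∈ ℚⁿ with Ax ≥ b and l ≤ x ≤ u satisfies cᵀx ≥ bᵀy + ∑ᵢ min(rᵢ·lᵢ, rᵢ·uᵢ). -/
/-!
Split `cᵀx = yᵀ(Ax) + rᵀx`. Since `y ≥ 0` and `Ax ≥ b`, the first term is at least `bᵀy`; each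
summand `rᵢxᵢ` of the second is linear in `xᵢ ∈ [lᵢ, uᵢ]`, hence at least `min (rᵢlᵢ) (rᵢuᵢ)`.
-/

open Matrix

section LinearOrder

variable {R : Type*} [Ring R] [LinearOrder R] [IsOrderedRing R]

theorem min_mul_le_mul_of_mem_Icc {r l x u : R} (hl : l ≤ x) (hu : x ≤ u) :
    min (r * l) (r * u) ≤ r * x := by
  rcases le_total 0 r with hr | hr
  · exact (min_le_left _ _).trans (mul_le_mul_of_nonneg_left hl hr)
  · exact (min_le_right _ _).trans (mul_le_mul_of_nonpos_left hu hr)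

theorem sum_min_mul_le_dotProduct {ι : Type*} [Fintype ι] {r l x u : ι → R}
    (hl : l ≤ x) (hu : x ≤ u) :
    ∑ i, min (r i * l i) (r i * u i) ≤ r ⬝ᵥ x :=
  Finset.sum_le_sum fun i _ => min_mul_le_mul_of_mem_Icc (hl i) (hu i)

end LinearOrder

theorem Matrix.dotProduct_eq_mulVec_dotProduct_add_sub_mulVec_transpose {R m n : Type*}
    [CommRing R] [Fintype m] [Fintype n] (A : Matrix m n R) (c x : n → R) (y : m → R) :
    c ⬝ᵥ x = (A *ᵥ x) ⬝ᵥ y + (c - Aᵀ *ᵥ y) ⬝ᵥ x := by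
  rw [sub_dotProduct, mulVec_transpose, ← dotProduct_mulVec, dotProduct_comm y]
  abel

/-- Validity of the bound-shift safe dual bounding method: for any nonnegative
(approximate) dual multiplier vector `y`, shifting with the residual
`r = c − Aᵀy` against finite variable bounds `l ≤ x ≤ u` yields the valid lower
bound `bᵀy + ∑ᵢ min(rᵢlᵢ, rᵢuᵢ)` on `cᵀx` for every `x` with `Ax ≥ b` and
`l ≤ x ≤ u`. -/
theorem bound_shift_valid
    (m n : ℕ) (A : Matrix (Fin m) (Fin n) ℚ) (b : Fin m → ℚ) (c : Fin n → ℚ)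
    (l u : Fin n → ℚ)
    (y : Fin m → ℚ) (hy : ∀ j, 0 ≤ y j)
    (r : Fin n → ℚ) (hr : r = c - Aᵀ *ᵥ y) :
    ∀ x : Fin n → ℚ, (∀ j, b j ≤ (A *ᵥ x) j) → (∀ i, l i ≤ x i) → (∀ i, x i ≤ u i) →
      b ⬝ᵥ y + ∑ i, min (r i * l i) (r i * u i) ≤ c ⬝ᵥ x := by
  intro x hAx hl hu
  subst hr
  calc b ⬝ᵥ y + ∑ i, min ((c - Aᵀ *ᵥ y) i * l i) ((c - Aᵀ *ᵥ y) i * u i)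
      ≤ (A *ᵥ x) ⬝ᵥ y + (c - Aᵀ *ᵥ y) ⬝ᵥ x :=
        add_le_add (dotProduct_le_dotProduct_of_nonneg_right hAx hy)
          (sum_min_mul_le_dotProduct hl hu)
    _ = c ⬝ᵥ x := (A.dotProduct_eq_mulVec_dotProduct_add_sub_mulVec_transpose c x y).symm
end
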